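/- Let ξ be a countable ordinal, M an infinite subset of ℕ, and ℒ an ω^ξ-uniform family on M. Then there exists an infinite subset L of M such that ℱ_ξ(L) ⊆ ℒ*. -/

import Mathlib

open Ordinal Filter Set

/-- `FinLT s t` : every element of `s` is smaller than every element of `t`
(i.e. `max s < min t`, vacuously true if one of them is empty). -/
def FinLT (s t : Finset ℕ) : Prop := ∀ a ∈ s, ∀ b ∈ t, a < b

/-- `s` is an initial segment of `t`  (`s ⪯ t`). -/
def InitSeg (s t : Finset ℕ) : Prop :=
  s ⊆ t ∧ ∀ a ∈ t, ∀ b ∈ s, a ≤ b → a ∈ s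

/-- `s` is a proper initial segment of `t`  (`s ≺ t`). -/
def PInitSeg (s t : Finset ℕ) : Prop := InitSeg s t ∧ s ≠ t

/-- `[M]^{<ω}` : the finite subsets of `M`. -/
def FinSubs (M : Set ℕ) : Set (Finset ℕ) := {s | ↑s ⊆ M}

/-- `ℒ(m) = {s : {m} ∪ s ∈ ℒ and {m} < s}`. -/
def famAt (L : Set (Finset ℕ)) (m : ℕ) : Set (Finset ℕ) :=
  {s | insert m s ∈ L ∧ ∀ a ∈ s, m < a}

/-- `ℒ*` : the family of initial segments of elements of `ℒ`. -/
def famStar (L : Set (Finset ℕ)) : Set (Finset ℕ) := {t | ∃ s ∈ L, InitSeg t s}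

/-- `ℒ_*` : the family of subsets of elements of `ℒ`. -/
def famSub (L : Set (Finset ℕ)) : Set (Finset ℕ) := {t | ∃ s ∈ L, t ⊆ s}

/-- A family is Sperner if no element is a proper subset of another. -/
def Sperner (L : Set (Finset ℕ)) : Prop := ¬ ∃ s ∈ L, ∃ t ∈ L, s ⊂ t

/-- A family is hereditary if it is closed under taking subsets. -/
def Hereditary (F : Set (Finset ℕ)) : Prop := ∀ s ∈ F, ∀ t ⊆ s, t ∈ F

/-- `IsUniform ξ ℒ M` : `ℒ` is a `ξ`-uniform family on `M`. -/
inductive IsUniform : Ordinal.{0} → Set (Finset ℕ) → Set ℕ → Prop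
  | zero (M : Set ℕ) : IsUniform 0 {(∅ : Finset ℕ)} M
  | succ (ζ : Ordinal.{0}) (L : Set (Finset ℕ)) (M : Set ℕ)
      (hsub : L ⊆ FinSubs M) (hne : (∅ : Finset ℕ) ∉ L)
      (h : ∀ m ∈ M, IsUniform ζ (famAt L m) (M ∩ Set.Ioi m)) :
      IsUniform (ζ + 1) L M
  | limit (ξ : Ordinal.{0}) (L : Set (Finset ℕ)) (M : Set ℕ)
      (hlim : Order.IsSuccLimit ξ)
      (hsub : L ⊆ FinSubs M) (hne : (∅ : Finset ℕ) ∉ L)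
      (ξm : ℕ → Ordinal.{0})
      (hmono : ∀ m ∈ M, ∀ n ∈ M, m < n → ξm m < ξm n)
      (hlt : ∀ m ∈ M, ξm m < ξ)
      (hsup : ∀ β < ξ, ∃ m ∈ M, β ≤ ξm m)
      (h : ∀ m ∈ M, IsUniform (ξm m) (famAt L m) (M ∩ Set.Ioi m)) :
      IsUniform ξ L M

/-- The characteristic function of a finite set, as an element of the
product space `ℕ → Bool` (i.e. `2^ℕ`). -/
def toChar (s : Finset ℕ) : ℕ → Bool := fun n => decide (n ∈ s)

/-- A family of finite subsets of `ℕ` is pointwise closed if its image in `2^ℕ`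
(under characteristic functions) is closed in the product topology. -/
def PtwiseClosed (F : Set (Finset ℕ)) : Prop := IsClosed (toChar '' F)

/-- The first strong Cantor--Bendixson derivative of `F` on `M`:
the set of `A ∈ F ∩ [M]^{<ω}` such that `A` is a cluster point (in `2^ℕ`) of
`{B ∈ F : B ⊆ A ∪ L}` for every infinite `L ⊆ M`. -/
def derivOne (M : Set ℕ) (F : Set (Finset ℕ)) : Set (Finset ℕ) :=
  {A | A ∈ F ∧ ↑A ⊆ M ∧ ∀ L : Set ℕ, L ⊆ M → L.Infinite →
    AccPt (toChar A) (𝓟 (toChar '' {B | B ∈ F ∧ ↑B ⊆ ↑A ∪ L}))}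

/-- The iterated strong Cantor--Bendixson derivatives `(F)^ξ_M`. -/
noncomputable def CBDeriv (F : Set (Finset ℕ)) (M : Set ℕ) (o : Ordinal.{0}) :
    Set (Finset ℕ) :=
  Ordinal.limitRecOn o F (fun _ ih => derivOne M ih)
    (fun o _ ih => ⋂ (β : Ordinal.{0}) (h : β < o), ih β h)

/-- The strong Cantor--Bendixson index `s_M(F)` : the least ordinal `ξ`
with `(F)^ξ_M = ∅`. -/
noncomputable def CBIndex (F : Set (Finset ℕ)) (M : Set ℕ) : Ordinal.{0} :=
  sInf {o : Ordinal.{0} | CBDeriv F M o = ∅}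

/-- The Schreier-type families `𝓑_a`, relative to a choice `c` of cofinal
sequences at limit ordinals. -/
noncomputable def SchreierB (c : Ordinal.{0} → ℕ → Ordinal.{0}) (a : Ordinal.{0}) :
    Set (Finset ℕ) :=
  Ordinal.limitRecOn a
    {s : Finset ℕ | ∃ n : ℕ, s = {n}}
    (fun _ ih => {s | ∃ (n : ℕ) (f : ℕ → Finset ℕ),
        0 < n ∧ (∃ h : (f 0).Nonempty, (f 0).min' h = n) ∧
        (∀ i < n, f i ∈ ih) ∧
        (∀ i j, i < j → j < n → FinLT (f i) (f j)) ∧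
        s = (Finset.range n).biUnion f})
    (fun a _ ih => {s | ∃ (h : s.Nonempty) (hlt : c a (s.min' h) < a), s ∈ ih _ hlt})

/-- The generalized Schreier system `ℱ_a`, relative to a choice `c` of cofinal
sequences at limit ordinals. -/
noncomputable def SchreierF (c : Ordinal.{0} → ℕ → Ordinal.{0}) (a : Ordinal.{0}) :
    Set (Finset ℕ) :=
  Ordinal.limitRecOn a
    {s : Finset ℕ | ∃ n : ℕ, s = {n}}
    (fun _ ih => {s | ∃ (n : ℕ) (f : ℕ → Finset ℕ),
        0 < n ∧ (∀ x ∈ f 0, n ≤ x) ∧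
        (∀ i < n, f i ∈ ih) ∧
        (∀ i j, i < j → j < n → FinLT (f i) (f j)) ∧
        s = (Finset.range n).biUnion f})
    (fun a _ ih => {s | ∃ (n : ℕ) (hlt : c a n < a), s ∈ ih _ hlt ∧ ∀ x ∈ s, n ≤ x})

/-- `c` is an admissible choice of cofinal sequences: at every countable limit
ordinal `a`, `c a` is an increasing sequence of ordinals below `a` with
supremum `a`. -/
def AdmissibleChoice (c : Ordinal.{0} → ℕ → Ordinal.{0}) : Prop :=
  ∀ a : Ordinal.{0}, Order.IsSuccLimit a → a.card ≤ Cardinal.aleph0 →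
    StrictMono (c a) ∧ (∀ n, c a n < a) ∧ (∀ β < a, ∃ n, β ≤ c a n)

/-!
Induction on `ξ`, for a statement about residues. Say that a family `𝓕` *peels off* `δ` if,
whenever `𝓛` contains a `γ`-uniform family on an infinite `M` with `γ ≥ β + δ`, there is an
infinite `L ⊆ M` such that for every `s ⊆ L` whose set of positions in `L` lies in `𝓕`, the
residue `{u | s < u, s ∪ u ∈ 𝓛}` still contains a `γ'`-uniform family, `γ' ≥ β`, on the part of
`L` beyond `s`. Singletons peel off `1` by the definition of uniformity. If `𝓕` peels off `δ₁`
and `𝓖` peels off `δ₂`, then the unions `t ∪ u` with `t ∈ 𝓕`, `u ∈ 𝓖`, `t < u` peel off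
`δ₂ + δ₁`, and `{s | s ∈ 𝓖 n, n ≤ min s}` peels off `δ` as soon as every `𝓖 n` does. Both
steps choose a set for every finite `t` that may come first and fuse these choices into a single
`L`, in which no point has a larger position than in the set chosen for `t`; this suffices
because all the families involved are spreading. Hence `ℱ_ξ` peels off `ω ^ ξ`, and for `β = 0`
the residue of `e(F)` is nonempty, that is, `e(F) ∈ ℒ*`.
-/

section

open scoped Classical

def tailSet (L : Set ℕ) (s : Finset ℕ) : Set ℕ := {x ∈ L | ∀ y ∈ s, y < x}

def residue (𝓛 : Set (Finset ℕ)) (t : Finset ℕ) : Set (Finset ℕ) :=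
  {u | t ∪ u ∈ 𝓛 ∧ FinLT t u}

-- `ℱ_a(L)` is `{s | ↑s ⊆ L ∧ idx L s ∈ ℱ_a}`: `idx L s` lists the positions in `L` of the
-- elements of `s`, counted from `0`.
noncomputable def idx (L : Set ℕ) (s : Finset ℕ) : Finset ℕ := s.image (Nat.count (· ∈ L))

def IsSpreading (𝓕 : Set (Finset ℕ)) : Prop :=
  ∀ s ∈ 𝓕, ∀ g : ℕ → ℕ, StrictMonoOn g s → (∀ x ∈ s, x ≤ g x) → s.image g ∈ 𝓕

theorem count_range_apply {e : ℕ → ℕ} (he : StrictMono e) (n : ℕ) :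
    Nat.count (· ∈ Set.range e) (e n) = n := by
  have hfilter : (Finset.range (e n)).filter (· ∈ Set.range e) = (Finset.range n).image e := by
    ext x
    simp only [Finset.mem_filter, Finset.mem_range, Finset.mem_image, Set.mem_range]
    constructor
    · rintro ⟨hx, m, rfl⟩
      exact ⟨m, he.lt_iff_lt.1 hx, rfl⟩
    · rintro ⟨m, hm, rfl⟩
      exact ⟨he hm, m, rfl⟩
  rw [Nat.count_eq_card_filter_range, hfilter, Finset.card_image_of_injective _ he.injective,
    Finset.card_range]

theorem idx_image_of_strictMono {e : ℕ → ℕ} (he : StrictMono e) (F : Finset ℕ) :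
    idx (Set.range e) (F.image e) = F := by
  simp only [idx, Finset.image_image, Function.comp_def, count_range_apply he, Finset.image_id']

theorem IsSpreading.idx_mem {𝓕 : Set (Finset ℕ)} (h𝓕 : IsSpreading 𝓕) {L A : Set ℕ}
    {s : Finset ℕ} (hsL : ↑s ⊆ L) (hsA : ↑s ⊆ A)
    (hcount : ∀ x ∈ s, Nat.count (· ∈ L) x ≤ Nat.count (· ∈ A) x) (hs : idx L s ∈ 𝓕) :
    idx A s ∈ 𝓕 := by
  have hnth : ∀ x ∈ s, Nat.nth (· ∈ L) (Nat.count (· ∈ L) x) = x :=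
    fun x hx => Nat.nth_count (p := (· ∈ L)) (hsL hx)
  have himage : (idx L s).image (Nat.count (· ∈ A) ∘ Nat.nth (· ∈ L)) = idx A s := by
    simp only [idx, Finset.image_image]
    exact Finset.image_congr fun x hx => by simp [hnth x hx]
  rw [← himage]
  refine h𝓕 _ hs _ ?_ ?_
  · rintro _ hi _ hj hij
    obtain ⟨x, hx, rfl⟩ := Finset.mem_image.1 hi
    obtain ⟨y, hy, rfl⟩ := Finset.mem_image.1 hj
    simp only [Function.comp_apply, hnth x hx, hnth y hy]
    exact Nat.count_strict_mono (hsA hx) (Nat.lt_of_count_lt_count hij)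
  · intro i hi
    obtain ⟨x, hx, rfl⟩ := Finset.mem_image.1 hi
    simpa [hnth x hx] using hcount x hx

theorem IsSpreading.idx_mem_of_subset {𝓕 : Set (Finset ℕ)} (h𝓕 : IsSpreading 𝓕) {L L' : Set ℕ}
    {s : Finset ℕ} (hs : ↑s ⊆ L') (hL' : L' ⊆ L) (h : idx L' s ∈ 𝓕) : idx L s ∈ 𝓕 :=
  h𝓕.idx_mem hs (hs.trans hL') (fun _ _ => Nat.count_mono_left fun _ _ hk => hL' hk) h

theorem eq_singleton_of_idx_eq_singleton {L : Set ℕ} {s : Finset ℕ} {n : ℕ} (hs : ↑s ⊆ L)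
    (h : idx L s = {n}) : ∃ m, s = {m} := by
  have hcard : s.card = 1 := by
    rw [← Finset.card_singleton n, ← h, idx, Finset.card_image_of_injOn]
    exact fun x hx y hy => Nat.count_injective (hs hx) (hs hy)
  exact Finset.card_eq_one.1 hcard

theorem exists_split_of_idx_eq_union {L : Set ℕ} {s A B : Finset ℕ} (h : idx L s = A ∪ B)
    (hAB : FinLT A B) : ∃ t u, FinLT t u ∧ t ∪ u = s ∧ idx L t = A ∧ idx L u = B := by
  refine ⟨s.filter (Nat.count (· ∈ L) · ∈ A), s.filter (Nat.count (· ∈ L) · ∈ B), ?_, ?_, ?_, ?_⟩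
  · intro x hx y hy
    exact Nat.lt_of_count_lt_count
      (hAB _ (Finset.mem_filter.1 hx).2 _ (Finset.mem_filter.1 hy).2)
  · rw [Finset.filter_union_right, Finset.filter_true_of_mem]
    intro x hx
    exact Finset.mem_union.1 (h ▸ Finset.mem_image_of_mem _ hx)
  · calc _ = (idx L s).filter (· ∈ A) := by simp only [idx, Finset.filter_image]
      _ = A := by rw [h, Finset.filter_mem_eq_inter, Finset.union_inter_cancel_left]
  · calc _ = (idx L s).filter (· ∈ B) := by simp only [idx, Finset.filter_image]
      _ = B := by rw [h, Finset.filter_mem_eq_inter, Finset.union_inter_cancel_right]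

theorem tailSet_empty (L : Set ℕ) : tailSet L ∅ = L := by
  simp [tailSet]

theorem inter_Ioi_infinite {M : Set ℕ} (hM : M.Infinite) (m : ℕ) : (M ∩ Set.Ioi m).Infinite :=
  (hM.sdiff (Set.finite_Iic m)).mono fun _ hx => ⟨hx.1, by simpa using hx.2⟩

theorem tailSet_infinite {L : Set ℕ} (hL : L.Infinite) (s : Finset ℕ) :
    (tailSet L s).Infinite :=
  (inter_Ioi_infinite hL (s.sup id)).mono fun _ hx =>
    ⟨hx.1, fun _ hy => (Finset.le_sup (f := id) hy).trans_lt hx.2⟩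

theorem residue_empty (𝓛 : Set (Finset ℕ)) : residue 𝓛 ∅ = 𝓛 := by
  simp [residue, FinLT]

theorem famAt_subset_residue_singleton {𝓠 𝓛 : Set (Finset ℕ)} (h : 𝓠 ⊆ 𝓛) (m : ℕ) :
    famAt 𝓠 m ⊆ residue 𝓛 {m} := fun u hu =>
  ⟨h (by simpa [← Finset.insert_eq] using hu.1), by simpa [FinLT] using hu.2⟩

theorem residue_residue_subset (𝓛 : Set (Finset ℕ)) (t u : Finset ℕ) :
    residue (residue 𝓛 t) u ⊆ residue 𝓛 (t ∪ u) := by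
  rintro v ⟨⟨hv, htv⟩, huv⟩
  refine ⟨by rwa [Finset.union_assoc], fun a ha b hb => ?_⟩
  rcases Finset.mem_union.1 ha with ha | ha
  · exact htv a ha b (Finset.mem_union_right _ hb)
  · exact huv a ha b hb

theorem mem_famStar_of_mem_residue {𝓛 : Set (Finset ℕ)} {s u : Finset ℕ}
    (hu : u ∈ residue 𝓛 s) : s ∈ famStar 𝓛 := by
  refine ⟨s ∪ u, hu.1, Finset.subset_union_left, fun a ha b hb hab => ?_⟩
  rcases Finset.mem_union.1 ha with ha | ha
  · exact ha
  · exact absurd (hu.2 b hb a ha) hab.not_gt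

/-! ### Uniform families -/

theorem famAt_inter_finSubs {𝓛 : Set (Finset ℕ)} {N : Set ℕ} {m : ℕ} (hm : m ∈ N) :
    famAt (𝓛 ∩ FinSubs N) m = famAt 𝓛 m ∩ FinSubs (N ∩ Set.Ioi m) := by
  ext u
  simp only [famAt, FinSubs, Set.mem_inter_iff, Set.mem_ofPred_eq, Finset.coe_insert,
    Set.insert_subset_iff, Set.subset_inter_iff]
  constructor
  · rintro ⟨⟨h𝓛, -, huN⟩, hmu⟩
    exact ⟨⟨h𝓛, hmu⟩, huN, fun x hx => hmu x hx⟩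
  · rintro ⟨⟨h𝓛, hmu⟩, huN, -⟩
    exact ⟨⟨h𝓛, hm, huN⟩, hmu⟩

theorem IsUniform.restrict {γ : Ordinal.{0}} {𝓛 : Set (Finset ℕ)} {M : Set ℕ}
    (h : IsUniform γ 𝓛 M) {N : Set ℕ} (hNM : N ⊆ M) (hN : N.Infinite) :
    IsUniform γ (𝓛 ∩ FinSubs N) N := by
  induction h generalizing N with
  | zero M =>
    rw [Set.inter_eq_self_of_subset_left]
    · exact IsUniform.zero N
    · simp [FinSubs]
  | succ ζ 𝓛 M _ hne _ ih =>
    refine IsUniform.succ ζ _ N (fun u hu => hu.2) (fun h => hne h.1) fun m hm => ?_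
    rw [famAt_inter_finSubs hm]
    exact ih m (hNM hm) (Set.inter_subset_inter_left _ hNM) (inter_Ioi_infinite hN m)
  | limit ξ 𝓛 M hlim _ hne ξm hmono hlt hsup _ ih =>
    refine IsUniform.limit ξ _ N hlim (fun u hu => hu.2) (fun h => hne h.1) ξm
      (fun m hm n hn => hmono m (hNM hm) n (hNM hn)) (fun m hm => hlt m (hNM hm))
      (fun β hβ => ?_) fun m hm => ?_
    · obtain ⟨m, hm, hβm⟩ := hsup β hβ
      obtain ⟨n, hn, hmn⟩ := hN.exists_gt m
      exact ⟨n, hn, hβm.trans (hmono m hm n (hNM hn) hmn).le⟩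
    · rw [famAt_inter_finSubs hm]
      exact ih m (hNM hm) (Set.inter_subset_inter_left _ hNM) (inter_Ioi_infinite hN m)

theorem IsUniform.nonempty {γ : Ordinal.{0}} {𝓛 : Set (Finset ℕ)} {M : Set ℕ}
    (h : IsUniform γ 𝓛 M) (hM : M.Infinite) : 𝓛.Nonempty := by
  induction h with
  | zero => exact ⟨∅, rfl⟩
  | succ _ _ M _ _ _ ih | limit _ _ M _ _ _ _ _ _ _ _ ih =>
    obtain ⟨m, hm⟩ := hM.nonempty
    obtain ⟨u, hu⟩ := ih m hm (inter_Ioi_infinite hM m)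
    exact ⟨_, hu.1⟩

def ContainsUniform (β : Ordinal.{0}) (𝓛 : Set (Finset ℕ)) (M : Set ℕ) : Prop :=
  ∃ γ, β ≤ γ ∧ ∃ 𝓠 ⊆ 𝓛, IsUniform γ 𝓠 M

theorem ContainsUniform.mono {β β' : Ordinal.{0}} {𝓛 𝓛' : Set (Finset ℕ)} {M N : Set ℕ}
    (h : ContainsUniform β 𝓛 M) (hβ : β' ≤ β) (h𝓛 : 𝓛 ⊆ 𝓛') (hNM : N ⊆ M) (hN : N.Infinite) :
    ContainsUniform β' 𝓛' N :=
  let ⟨γ, hγ, 𝓠, h𝓠, hu⟩ := h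
  ⟨γ, hβ.trans hγ, 𝓠 ∩ FinSubs N, fun _ hu => h𝓛 (h𝓠 hu.1), hu.restrict hNM hN⟩

theorem ContainsUniform.nonempty {β : Ordinal.{0}} {𝓛 : Set (Finset ℕ)} {M : Set ℕ}
    (h : ContainsUniform β 𝓛 M) (hM : M.Infinite) : 𝓛.Nonempty :=
  let ⟨_, _, _, h𝓠, hu⟩ := h
  (hu.nonempty hM).mono h𝓠

theorem IsUniform.eventually_containsUniform_famAt {γ β : Ordinal.{0}} {𝓛 : Set (Finset ℕ)}
    {M : Set ℕ} (h : IsUniform γ 𝓛 M) (hβ : β < γ) :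
    ∀ᶠ m in atTop, m ∈ M → ContainsUniform β (famAt 𝓛 m) (M ∩ Set.Ioi m) := by
  cases h with
  | zero => exact absurd hβ not_lt_zero
  | succ ζ _ _ _ _ h =>
    exact Eventually.of_forall fun m hm =>
      ⟨ζ, Order.lt_add_one_iff.1 hβ, _, subset_rfl, h m hm⟩
  | limit _ _ _ _ _ _ ξm hmono _ hsup h =>
    obtain ⟨m₀, hm₀, hβm₀⟩ := hsup β hβ
    filter_upwards [eventually_ge_atTop m₀] with m hm hmM
    refine ⟨ξm m, hβm₀.trans ?_, _, subset_rfl, h m hmM⟩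
    rcases hm.eq_or_lt with rfl | hlt
    · exact le_rfl
    · exact (hmono m₀ hm₀ m hmM hlt).le

/-! ### Peeling -/

def IsPeeling (𝓕 : Set (Finset ℕ)) (β : Ordinal.{0}) (𝓛 : Set (Finset ℕ)) (L : Set ℕ) : Prop :=
  ∀ s : Finset ℕ, ↑s ⊆ L → idx L s ∈ 𝓕 → ContainsUniform β (residue 𝓛 s) (tailSet L s)

def PeelsOff (𝓕 : Set (Finset ℕ)) (δ : Ordinal.{0}) : Prop :=
  ∀ (β : Ordinal.{0}) (M : Set ℕ) (𝓛 : Set (Finset ℕ)), M.Infinite →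
    ContainsUniform (β + δ) 𝓛 M → ∃ L ⊆ M, L.Infinite ∧ IsPeeling 𝓕 β 𝓛 L

theorem IsPeeling.mono_set {𝓕 𝓛 : Set (Finset ℕ)} {β : Ordinal.{0}} {L L' : Set ℕ}
    (h𝓕 : IsSpreading 𝓕) (h : IsPeeling 𝓕 β 𝓛 L) (hL' : L' ⊆ L) (hL'inf : L'.Infinite) :
    IsPeeling 𝓕 β 𝓛 L' := fun s hs hidx =>
  (h s (hs.trans hL') (h𝓕.idx_mem_of_subset hs hL' hidx)).mono le_rfl subset_rfl
    (fun _ hx => ⟨hL' hx.1, hx.2⟩) (tailSet_infinite hL'inf s)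

theorem PeelsOff.mono {𝓕 𝓕' : Set (Finset ℕ)} {δ δ' : Ordinal.{0}} (h : PeelsOff 𝓕 δ)
    (h𝓕 : 𝓕' ⊆ 𝓕) (hδ : δ ≤ δ') : PeelsOff 𝓕' δ' := by
  intro β M 𝓛 hM h𝓛
  obtain ⟨L, hLM, hL, hpeel⟩ :=
    h β M 𝓛 hM (h𝓛.mono (add_le_add_right hδ β) subset_rfl subset_rfl hM)
  exact ⟨L, hLM, hL, fun s hs hidx => hpeel s hs (h𝓕 hidx)⟩

theorem peelsOff_singleton_empty : PeelsOff {∅} 0 := by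
  intro β M 𝓛 hM h𝓛
  refine ⟨M, subset_rfl, hM, fun s _ hidx => ?_⟩
  obtain rfl : s = ∅ := Finset.image_eq_empty.1 hidx
  rw [residue_empty, tailSet_empty]
  simpa using h𝓛

theorem peelsOff_singletons : PeelsOff {s | ∃ n, s = {n}} 1 := by
  rintro β M 𝓛 hM ⟨γ, hγ, 𝓠, h𝓠, hu⟩
  obtain ⟨m₀, hm₀⟩ := eventually_atTop.1
    (hu.eventually_containsUniform_famAt (Order.add_one_le_iff.1 hγ))
  refine ⟨M ∩ Set.Ioi m₀, Set.inter_subset_left, inter_Ioi_infinite hM m₀, ?_⟩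
  rintro s hs ⟨n, hn⟩
  obtain ⟨m, rfl⟩ := eq_singleton_of_idx_eq_singleton hs hn
  have hm : m ∈ M ∩ Set.Ioi m₀ := hs (Finset.mem_singleton_self m)
  exact (hm₀ m hm.2.le hm.1).mono le_rfl (famAt_subset_residue_singleton h𝓠 m)
    (fun x hx => ⟨hx.1.1, hx.2 m (Finset.mem_singleton_self m)⟩)
    (tailSet_infinite (inter_Ioi_infinite hM m₀) _)

/-! ### Fusion -/

section Fusion

variable {M : Set ℕ} {P : Finset ℕ → Set ℕ → Prop}

theorem exists_subset_forall_of_dense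
    (hdense : ∀ t N, N ⊆ M → N.Infinite → ∃ A ⊆ N, A.Infinite ∧ P t A)
    (hher : ∀ t A B, P t A → B ⊆ A → B.Infinite → P t B) (T : Finset (Finset ℕ))
    {N : Set ℕ} (hNM : N ⊆ M) (hN : N.Infinite) : ∃ A ⊆ N, A.Infinite ∧ ∀ t ∈ T, P t A := by
  induction T using Finset.induction_on with
  | empty => exact ⟨N, subset_rfl, hN, by simp⟩
  | insert t T _ ih =>
    obtain ⟨A, hAN, hA, hPA⟩ := ih
    obtain ⟨B, hBA, hB, hPB⟩ := hdense t A (hAN.trans hNM) hA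
    refine ⟨B, hBA.trans hAN, hB, ?_⟩
    simp only [Finset.mem_insert, forall_eq_or_imp]
    exact ⟨hPB, fun t' ht' => hher t' A B (hPA t' ht') hBA hB⟩

theorem exists_fusion_seq
    (hdense : ∀ t N, N ⊆ M → N.Infinite → ∃ A ⊆ N, A.Infinite ∧ P t A)
    (hher : ∀ t A B, P t A → B ⊆ A → B.Infinite → P t B) (hM : M.Infinite) :
    ∃ (ℓ : ℕ → ℕ) (N : ℕ → Set ℕ), N 0 ⊆ M ∧ P ∅ (N 0) ∧
      (∀ k, ℓ k ∈ N k ∧ k ≤ Nat.count (· ∈ N k) (ℓ k)) ∧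
      (∀ k, N (k + 1) ⊆ N k ∩ Set.Ioi (ℓ k)) ∧
      ∀ k, ∀ t ⊆ Finset.range (ℓ k + 1), P t (N (k + 1)) := by
  let S := {N : Set ℕ // N ⊆ M ∧ N.Infinite}
  have hstep : ∀ (k : ℕ) (N : S), ∃ ℓ ∈ N.1, k ≤ Nat.count (· ∈ N.1) ℓ ∧
      ∃ N' : S, N'.1 ⊆ N.1 ∩ Set.Ioi ℓ ∧ ∀ t ⊆ Finset.range (ℓ + 1), P t N'.1 := by
    rintro k ⟨N, hNM, hN⟩
    have hℓ := Nat.nth_mem_of_infinite (p := (· ∈ N)) hN k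
    obtain ⟨A, hA, hAinf, hPA⟩ := exists_subset_forall_of_dense hdense hher
      (Finset.range (Nat.nth (· ∈ N) k + 1)).powerset (Set.inter_subset_left.trans hNM)
      (inter_Ioi_infinite hN _)
    exact ⟨_, hℓ, (Nat.count_nth_of_infinite (p := (· ∈ N)) hN k).ge,
      ⟨A, hA.trans (Set.inter_subset_left.trans hNM), hAinf⟩, hA,
      fun t ht => hPA t (Finset.mem_powerset.2 ht)⟩
  choose ℓ hℓN hℓcount next hnext hPnext using hstep
  obtain ⟨N₀, hN₀M, hN₀, hPN₀⟩ := hdense ∅ M subset_rfl hM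
  let seq : ℕ → S := fun k => Nat.rec ⟨N₀, hN₀M, hN₀⟩ (fun k N => next k N) k
  exact ⟨fun k => ℓ k (seq k), fun k => (seq k).1, hN₀M, hPN₀,
    fun k => ⟨hℓN k _, hℓcount k _⟩, fun k => hnext k _, fun k => hPnext k _⟩

theorem exists_fusion
    (hdense : ∀ t N, N ⊆ M → N.Infinite → ∃ A ⊆ N, A.Infinite ∧ P t A)
    (hher : ∀ t A B, P t A → B ⊆ A → B.Infinite → P t B) (hM : M.Infinite) :
    ∃ L ⊆ M, L.Infinite ∧ ∀ t : Finset ℕ, ↑t ⊆ L → ∃ A, P t A ∧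
      ∀ x ∈ tailSet L t, x ∈ A ∧ Nat.count (· ∈ L) x ≤ Nat.count (· ∈ A) x := by
  obtain ⟨ℓ, N, hN₀M, hPN₀, hℓ, hNsucc, hPN⟩ := exists_fusion_seq hdense hher hM
  have hNanti : Antitone N :=
    antitone_nat_of_succ_le fun k => (hNsucc k).trans Set.inter_subset_left
  have hℓmono : StrictMono ℓ := strictMono_nat_of_lt_succ fun k => (hNsucc k (hℓ (k + 1)).1).2
  have hlate : ∀ j m, j ≤ m → ℓ m ∈ N j ∧
      Nat.count (· ∈ Set.range ℓ) (ℓ m) ≤ Nat.count (· ∈ N j) (ℓ m) := by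
    intro j m hjm
    refine ⟨hNanti hjm (hℓ m).1, ?_⟩
    rw [count_range_apply hℓmono]
    exact (hℓ m).2.trans (Nat.count_mono_left fun x _ hx => hNanti hjm hx)
  refine ⟨Set.range ℓ, ?_, Set.infinite_range_of_injective hℓmono.injective, fun t ht => ?_⟩
  · rintro _ ⟨m, rfl⟩
    exact hN₀M (hNanti m.zero_le (hℓ m).1)
  rcases t.eq_empty_or_nonempty with rfl | htne
  · exact ⟨N 0, hPN₀, by rintro _ ⟨⟨m, rfl⟩, -⟩; exact hlate 0 m m.zero_le⟩
  obtain ⟨k, hk⟩ := ht (t.max'_mem htne)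
  refine ⟨N (k + 1), hPN k t fun y hy => ?_, ?_⟩
  · exact Finset.mem_range_succ_iff.2 (hk ▸ t.le_max' y hy)
  · rintro _ ⟨⟨m, rfl⟩, hm⟩
    exact hlate (k + 1) m (hℓmono.lt_iff_lt.1 (hk ▸ hm _ (t.max'_mem htne)))

end Fusion

/-! ### Successive unions and diagonal families -/

def concat (𝓕 𝓖 : Set (Finset ℕ)) : Set (Finset ℕ) :=
  {s | ∃ t ∈ 𝓕, ∃ u ∈ 𝓖, FinLT t u ∧ t ∪ u = s}

def successiveUnions (𝓕 : Set (Finset ℕ)) : ℕ → Set (Finset ℕ)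
  | 0 => {∅}
  | k + 1 => concat 𝓕 (successiveUnions 𝓕 k)

theorem IsSpreading.concat {𝓕 𝓖 : Set (Finset ℕ)} (h𝓕 : IsSpreading 𝓕) (h𝓖 : IsSpreading 𝓖) :
    IsSpreading (concat 𝓕 𝓖) := by
  rintro _ ⟨t, ht, u, hu, htu, rfl⟩ g hg hge
  simp only [Finset.coe_union, Finset.mem_union] at hg hge
  refine ⟨t.image g, h𝓕 t ht g (hg.mono Set.subset_union_left) fun x hx => hge x (.inl hx),
    u.image g, h𝓖 u hu g (hg.mono Set.subset_union_right) fun x hx => hge x (.inr hx), ?_,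
    (Finset.image_union t u).symm⟩
  simp only [FinLT, Finset.mem_image]
  rintro _ ⟨x, hx, rfl⟩ _ ⟨y, hy, rfl⟩
  exact hg (Or.inl hx) (Or.inr hy) (htu x hx y hy)

theorem IsSpreading.successiveUnions {𝓕 : Set (Finset ℕ)} (h𝓕 : IsSpreading 𝓕) (k : ℕ) :
    IsSpreading (successiveUnions 𝓕 k) := by
  induction k with
  | zero =>
    rintro _ rfl g - -
    exact Finset.image_empty g
  | succ k ih => exact h𝓕.concat ih

theorem PeelsOff.concat {𝓕 𝓖 : Set (Finset ℕ)} {δ₁ δ₂ : Ordinal.{0}} (h𝓕 : PeelsOff 𝓕 δ₁)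
    (h𝓖 : PeelsOff 𝓖 δ₂) (hs𝓕 : IsSpreading 𝓕) (hs𝓖 : IsSpreading 𝓖) :
    PeelsOff (concat 𝓕 𝓖) (δ₂ + δ₁) := by
  intro β M 𝓛 hM h𝓛
  rw [← add_assoc] at h𝓛
  obtain ⟨L₁, hL₁M, hL₁, hpeel₁⟩ := h𝓕 (β + δ₂) M 𝓛 hM h𝓛
  let P : Finset ℕ → Set ℕ → Prop := fun t A =>
    ContainsUniform (β + δ₂) (residue 𝓛 t) (tailSet L₁ t) → IsPeeling 𝓖 β (residue 𝓛 t) A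
  have hdense : ∀ t N, N ⊆ L₁ → N.Infinite → ∃ A ⊆ N, A.Infinite ∧ P t A := by
    intro t N hNL₁ hN
    by_cases H : ContainsUniform (β + δ₂) (residue 𝓛 t) (tailSet L₁ t)
    · obtain ⟨A, hA, hAinf, hpeel⟩ := h𝓖 β (tailSet N t) (residue 𝓛 t) (tailSet_infinite hN t)
        (H.mono le_rfl subset_rfl (fun x hx => ⟨hNL₁ hx.1, hx.2⟩) (tailSet_infinite hN t))
      exact ⟨A, hA.trans fun x hx => hx.1, hAinf, fun _ => hpeel⟩
    · exact ⟨N, subset_rfl, hN, fun h => absurd h H⟩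
  have hher : ∀ t A B, P t A → B ⊆ A → B.Infinite → P t B :=
    fun t A B hA hBA hB H => (hA H).mono_set hs𝓖 hBA hB
  obtain ⟨L, hLL₁, hL, hfus⟩ := exists_fusion hdense hher hL₁
  refine ⟨L, hLL₁.trans hL₁M, hL, ?_⟩
  rintro s hsL ⟨t', ht', u', hu', htu', hs'⟩
  obtain ⟨t, u, htu, rfl, rfl, rfl⟩ := exists_split_of_idx_eq_union hs'.symm htu'
  rw [Finset.coe_union, Set.union_subset_iff] at hsL
  obtain ⟨A, hPA, hA⟩ := hfus t hsL.1
  have hpeelA := hPA (hpeel₁ t (hsL.1.trans hLL₁) (hs𝓕.idx_mem_of_subset hsL.1 hLL₁ ht'))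
  have huA : ∀ x ∈ u, x ∈ A ∧ Nat.count (· ∈ L) x ≤ Nat.count (· ∈ A) x :=
    fun x hx => hA x ⟨hsL.2 hx, fun y hy => htu y hy x hx⟩
  have htail : tailSet L (t ∪ u) ⊆ tailSet A u := fun x hx =>
    ⟨(hA x ⟨hx.1, fun y hy => hx.2 y (Finset.mem_union_left _ hy)⟩).1,
      fun y hy => hx.2 y (Finset.mem_union_right _ hy)⟩
  exact (hpeelA u (fun x hx => (huA x hx).1)
    (hs𝓖.idx_mem hsL.2 (fun x hx => (huA x hx).1) (fun x hx => (huA x hx).2) hu')).mono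
    le_rfl (residue_residue_subset 𝓛 t u) htail (tailSet_infinite hL _)

theorem PeelsOff.successiveUnions {𝓕 : Set (Finset ℕ)} {δ : Ordinal.{0}} (h : PeelsOff 𝓕 δ)
    (hs : IsSpreading 𝓕) (k : ℕ) : PeelsOff (successiveUnions 𝓕 k) (δ * k) := by
  induction k with
  | zero => exact peelsOff_singleton_empty.mono subset_rfl zero_le
  | succ k ih =>
    rw [Nat.cast_succ, mul_add_one]
    exact h.concat ih hs (hs.successiveUnions k)

theorem peelsOff_diagonal {𝓖 : ℕ → Set (Finset ℕ)} {δ : Ordinal.{0}}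
    (h𝓖 : ∀ n, PeelsOff (𝓖 n) δ) (hs : ∀ n, IsSpreading (𝓖 n)) :
    PeelsOff {s | ∃ n, s ∈ 𝓖 n ∧ ∀ x ∈ s, n ≤ x} δ := by
  intro β M 𝓛 hM h𝓛
  -- `t` will be the first `n` points of `L`, where `n` is the index of the block `𝓖 n`
  let P : Finset ℕ → Set ℕ → Prop := fun t A => IsPeeling (𝓖 t.card) β 𝓛 A
  have hdense : ∀ t N, N ⊆ M → N.Infinite → ∃ A ⊆ N, A.Infinite ∧ P t A :=
    fun t N hNM hN => h𝓖 t.card β N 𝓛 hN (h𝓛.mono le_rfl subset_rfl hNM hN)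
  have hher : ∀ t A B, P t A → B ⊆ A → B.Infinite → P t B :=
    fun t A B hA hBA hB => hA.mono_set (hs _) hBA hB
  obtain ⟨L, hLM, hL, hfus⟩ := exists_fusion hdense hher hM
  refine ⟨L, hLM, hL, ?_⟩
  rintro s hsL ⟨n, hn, hle⟩
  rcases s.eq_empty_or_nonempty with rfl | ⟨z, hz⟩
  · rw [residue_empty, tailSet_empty]
    exact h𝓛.mono le_self_add subset_rfl hLM hL
  set t := (Finset.range n).image (Nat.nth (· ∈ L))
  have htL : ↑t ⊆ L := by
    simp only [t, Finset.coe_image]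
    rintro _ ⟨i, -, rfl⟩
    exact Nat.nth_mem_of_infinite (p := (· ∈ L)) hL i
  have htcard : t.card = n := by
    rw [Finset.card_image_of_injective _ (Nat.nth_injective (p := (· ∈ L)) hL), Finset.card_range]
  have hts : ∀ y ∈ t, ∀ x ∈ s, y < x := by
    intro y hy x hx
    obtain ⟨i, hi, rfl⟩ := Finset.mem_image.1 hy
    exact Nat.nth_lt_of_lt_count
      ((Finset.mem_range.1 hi).trans_le (hle _ (Finset.mem_image_of_mem _ hx)))
  obtain ⟨A, hPA, hA⟩ := hfus t htL
  have hsA : ∀ x ∈ s, x ∈ A ∧ Nat.count (· ∈ L) x ≤ Nat.count (· ∈ A) x :=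
    fun x hx => hA x ⟨hsL hx, fun y hy => hts y hy x hx⟩
  refine (hPA s (fun x hx => (hsA x hx).1) ?_).mono le_rfl subset_rfl
    (fun x hx => ⟨(hA x ⟨hx.1, fun y hy => (hts y hy z hz).trans (hx.2 z hz)⟩).1, hx.2⟩)
    (tailSet_infinite hL s)
  rw [htcard]
  exact (hs n).idx_mem hsL (fun x hx => (hsA x hx).1) (fun x hx => (hsA x hx).2) hn

/-! ### Schreier families -/

theorem schreierF_zero (c : Ordinal.{0} → ℕ → Ordinal.{0}) :
    SchreierF c 0 = {s | ∃ n, s = {n}} :=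
  Ordinal.limitRecOn_zero ..

theorem schreierF_add_one (c : Ordinal.{0} → ℕ → Ordinal.{0}) (a : Ordinal.{0}) :
    SchreierF c (a + 1) = {s | ∃ (n : ℕ) (f : ℕ → Finset ℕ),
        0 < n ∧ (∀ x ∈ f 0, n ≤ x) ∧ (∀ i < n, f i ∈ SchreierF c a) ∧
        (∀ i j, i < j → j < n → FinLT (f i) (f j)) ∧ s = (Finset.range n).biUnion f} :=
  Ordinal.limitRecOn_add_one ..

theorem schreierF_limit (c : Ordinal.{0} → ℕ → Ordinal.{0}) {a : Ordinal.{0}}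
    (ha : Order.IsSuccLimit a) :
    SchreierF c a = {s | ∃ (n : ℕ) (_ : c a n < a), s ∈ SchreierF c (c a n) ∧ ∀ x ∈ s, n ≤ x} :=
  Ordinal.limitRecOn_limit _ _ _ _ ha

theorem schreierF_nonempty (c : Ordinal.{0} → ℕ → Ordinal.{0}) (a : Ordinal.{0}) :
    ∀ s ∈ SchreierF c a, s.Nonempty := by
  induction a using Ordinal.limitRecOn with
  | zero =>
    rw [schreierF_zero]
    rintro _ ⟨n, rfl⟩
    exact Finset.singleton_nonempty n
  | add_one b ih =>
    rw [schreierF_add_one]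
    rintro _ ⟨n, f, hn, -, hf, -, rfl⟩
    exact (ih _ (hf 0 hn)).mono (Finset.subset_biUnion_of_mem f (Finset.mem_range.2 hn))
  | limit a ha ih =>
    rw [schreierF_limit c ha]
    rintro s ⟨n, hlt, hs, -⟩
    exact ih _ hlt s hs

theorem isSpreading_schreierF (c : Ordinal.{0} → ℕ → Ordinal.{0}) (a : Ordinal.{0}) :
    IsSpreading (SchreierF c a) := by
  induction a using Ordinal.limitRecOn with
  | zero =>
    rw [schreierF_zero]
    rintro _ ⟨n, rfl⟩ g - -
    exact ⟨g n, Finset.image_singleton g n⟩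
  | add_one b ih =>
    rw [schreierF_add_one]
    rintro _ ⟨n, f, hn, hmin, hf, hsucc, rfl⟩ g hg hge
    have hsub : ∀ i < n, ↑(f i) ⊆ (↑((Finset.range n).biUnion f) : Set ℕ) := fun i hi =>
      Finset.coe_subset.2 (Finset.subset_biUnion_of_mem f (Finset.mem_range.2 hi))
    refine ⟨n, fun i => (f i).image g, hn, ?_, fun i hi => ih _ (hf i hi) g (hg.mono (hsub i hi))
      fun x hx => hge x (hsub i hi hx), ?_, Finset.biUnion_image⟩
    · simp only [Finset.mem_image]
      rintro _ ⟨x, hx, rfl⟩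
      exact (hmin x hx).trans (hge x (hsub 0 hn hx))
    · simp only [FinLT, Finset.mem_image]
      rintro i j hij hjn _ ⟨x, hx, rfl⟩ _ ⟨y, hy, rfl⟩
      exact hg (hsub i (hij.trans hjn) hx) (hsub j hjn hy) (hsucc i j hij hjn x hx y hy)
  | limit a ha ih =>
    rw [schreierF_limit c ha]
    rintro s ⟨n, hlt, hs, hle⟩ g hg hge
    refine ⟨n, hlt, ih _ hlt s hs g hg hge, ?_⟩
    simp only [Finset.mem_image]
    rintro _ ⟨x, hx, rfl⟩
    exact (hle x hx).trans (hge x hx)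

theorem biUnion_mem_successiveUnions {𝓕 : Set (Finset ℕ)} {n : ℕ} {f : ℕ → Finset ℕ}
    (hf : ∀ i < n, f i ∈ 𝓕) (hsucc : ∀ i j, i < j → j < n → FinLT (f i) (f j)) :
    (Finset.range n).biUnion f ∈ successiveUnions 𝓕 n := by
  induction n generalizing f with
  | zero => exact Finset.biUnion_empty
  | succ n ih =>
    rw [Finset.range_add_one', Finset.biUnion_insert, Finset.map_eq_image, Finset.image_biUnion]
    refine ⟨f 0, hf 0 n.succ_pos, _, ih (fun i hi => hf (i + 1) (by omega))
      (fun i j hij hjn => hsucc (i + 1) (j + 1) (by omega) (by omega)), ?_, rfl⟩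
    simp only [FinLT, Finset.mem_biUnion, Finset.mem_range]
    rintro x hx y ⟨i, hi, hy⟩
    exact hsucc 0 (i + 1) i.succ_pos (by omega) x hx y hy

theorem schreierF_add_one_subset (c : Ordinal.{0} → ℕ → Ordinal.{0}) (a : Ordinal.{0}) :
    SchreierF c (a + 1) ⊆
      {s | ∃ n, s ∈ successiveUnions (SchreierF c a) n ∧ ∀ x ∈ s, n ≤ x} := by
  rw [schreierF_add_one]
  rintro _ ⟨n, f, hn, hmin, hf, hsucc, rfl⟩
  refine ⟨n, biUnion_mem_successiveUnions hf hsucc, fun x hx => ?_⟩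
  obtain ⟨i, hi, hxi⟩ := Finset.mem_biUnion.1 hx
  rcases i.eq_zero_or_pos with rfl | hi0
  · exact hmin x hxi
  · obtain ⟨z, hz⟩ := schreierF_nonempty c a (f 0) (hf 0 hn)
    exact (hmin z hz).trans (hsucc 0 i hi0 (Finset.mem_range.1 hi) z hz x hxi).le

theorem peelsOff_schreierF (c : Ordinal.{0} → ℕ → Ordinal.{0}) (a : Ordinal.{0}) :
    PeelsOff (SchreierF c a) (ω ^ a) := by
  induction a using Ordinal.limitRecOn with
  | zero =>
    rw [schreierF_zero, Ordinal.opow_zero]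
    exact peelsOff_singletons
  | add_one b ih =>
    have hs := isSpreading_schreierF c b
    refine (peelsOff_diagonal (fun n => (ih.successiveUnions hs n).mono subset_rfl ?_)
      hs.successiveUnions).mono (schreierF_add_one_subset c b) le_rfl
    rw [Ordinal.opow_add_one]
    gcongr
    exact (Ordinal.natCast_lt_omega0 n).le
  | limit a ha ih =>
    refine (peelsOff_diagonal (𝓖 := fun n => {s | c a n < a ∧ s ∈ SchreierF c (c a n)})
      (fun n => ?_) fun n s hs g hg hge => ⟨hs.1, isSpreading_schreierF c _ s hs.2 g hg hge⟩).mono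
      ?_ le_rfl
    · by_cases h : c a n < a
      · exact (ih _ h).mono (fun s hs => hs.2) (Ordinal.opow_le_opow_right Ordinal.omega0_pos h.le)
      · exact peelsOff_singleton_empty.mono (fun s hs => absurd hs.1 h) zero_le
    · rw [schreierF_limit c ha]
      rintro s ⟨n, hlt, hs, hle⟩
      exact ⟨n, ⟨hlt, hs⟩, hle⟩

end

theorem schreier_in_star_general (c : Ordinal.{0} → ℕ → Ordinal.{0})
    (ξ : Ordinal.{0})
    (M : Set ℕ) (hM : M.Infinite)
    (𝓛 : Set (Finset ℕ)) (h𝓛 : IsUniform (Ordinal.omega0 ^ ξ) 𝓛 M) :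
    ∃ L : Set ℕ, L ⊆ M ∧ L.Infinite ∧
      ∀ e : ℕ → ℕ, StrictMono e → Set.range e = L →
        ∀ F ∈ SchreierF c ξ, F.image e ∈ famStar 𝓛 := by
  obtain ⟨L, hLM, hL, hpeel⟩ :=
    peelsOff_schreierF c ξ 0 M 𝓛 hM ⟨_, (zero_add _).le, 𝓛, subset_rfl, h𝓛⟩
  refine ⟨L, hLM, hL, ?_⟩
  rintro e he rfl F hF
  obtain ⟨u, hu⟩ := (hpeel (F.image e) (by simp)
    (by rwa [idx_image_of_strictMono he])).nonempty (tailSet_infinite hL _)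
  exact mem_famStar_of_mem_residue hu

/-- **Proposition 3.1.** If `ℒ` is an `ω^ξ`-uniform family on the infinite set
`M`, then there is an infinite `L ⊆ M` with `ℱ_ξ(L) ⊆ ℒ*`, where `ℱ_ξ(L)` is
the image of `ℱ_ξ` under the increasing enumeration `e` of `L`. -/
theorem schreier_in_star (c : Ordinal.{0} → ℕ → Ordinal.{0})
    (hc : AdmissibleChoice c)
    (ξ : Ordinal.{0}) (hξ : ξ.card ≤ Cardinal.aleph0)
    (M : Set ℕ) (hM : M.Infinite)
    (𝓛 : Set (Finset ℕ)) (h𝓛 : IsUniform (Ordinal.omega0 ^ ξ) 𝓛 M) :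
    ∃ L : Set ℕ, L ⊆ M ∧ L.Infinite ∧
      ∀ e : ℕ → ℕ, StrictMono e → Set.range e = L →
        ∀ F ∈ SchreierF c ξ, F.image e ∈ famStar 𝓛 :=
  schreier_in_star_general c ξ M hM 𝓛 h𝓛
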